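/- arXiv:2002.08905 — 4 statements merged into one kernel-verified Lean document; each statement's English description precedes it below -/
import Mathlib

section
/- Let (C₁, ε₁) and (C₂, ε₂) be counital objects in 𝒜. The following are equivalent: (1) C₁ ≤_L C₂; (2) C₁ ≤_R C₂; (3) there exists a morphism ν : C₁ → C₂ with ε₂ ∘ ν = ε₁. -/
open CategoryTheory Category Limits MonoidalCategory ZeroObject

noncomputable section

variable {𝒜 : Type*} [Category 𝒜] [MonoidalCategory 𝒜] [Preadditive 𝒜] [MonoidalPreadditive 𝒜]

/-- `(C, ε)` is a counital object: both `ε ⋆ id_C` and `id_C ⋆ ε` admit right inverses. -/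
def IsCounital (C : 𝒜) (ε : C ⟶ 𝟙_ 𝒜) : Prop :=
  (∃ ΔL : C ⟶ C ⊗ C, ΔL ≫ (ε ▷ C) ≫ (λ_ C).hom = 𝟙 C) ∧
  (∃ ΔR : C ⟶ C ⊗ C, ΔR ≫ (C ◁ ε) ≫ (ρ_ C).hom = 𝟙 C)

/-- `X` is a retract of `Y`. -/
def IsRetractOf (X Y : 𝒜) : Prop :=
  ∃ (σ : X ⟶ Y) (π : Y ⟶ X), σ ≫ π = 𝟙 X

/-- The left cell (pre)order: `X ≤_L Y` iff `X` is a retract of `Z ⋆ Y` for some `Z`. -/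
def leqL (X Y : 𝒜) : Prop := ∃ Z : 𝒜, IsRetractOf X (Z ⊗ Y)

/-- The right cell (pre)order: `X ≤_R Y` iff `X` is a retract of `Y ⋆ Z` for some `Z`. -/
def leqR (X Y : 𝒜) : Prop := ∃ Z : 𝒜, IsRetractOf X (Y ⊗ Z)

/-- `X` is right `C`-projective. -/
def RightCProjective (C : 𝒜) (ε : C ⟶ 𝟙_ 𝒜) (X : 𝒜) : Prop :=
  ∃ a : X ⟶ X ⊗ C, a ≫ (X ◁ ε) ≫ (ρ_ X).hom = 𝟙 X

/-- `X` is left `C`-projective. -/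
def LeftCProjective (C : 𝒜) (ε : C ⟶ 𝟙_ 𝒜) (X : 𝒜) : Prop :=
  ∃ a : X ⟶ C ⊗ X, a ≫ (ε ▷ X) ≫ (λ_ X).hom = 𝟙 X

end

/-!
For counital `(C, ε)` the relation `X ≤_L C` says exactly that `X ◁ ε ≫ ρ_X` has a right inverse
`a` ("`X` is right `C`-projective"): `C` itself is, by counitality, hence so is every `Z ⊗ C` and
every retract of it; conversely `a` exhibits `X` as a retract of `X ⊗ C`. If `X` is right
`C`-projective, any `f : X ⟶ 𝟙` factors through `ε` as `a ≫ f ▷ C ≫ λ_C`; and a factorisation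
`ν ≫ ε₂ = ε₁` turns a splitting `a` for `ε₁` into the splitting `a ≫ X ◁ ν` for `ε₂`. Hence
`C₁ ≤_L C₂` iff `ε₁` factors through `ε₂`, and symmetrically for `≤_R`.
-/

section CProjective

variable {𝒜 : Type*} [Category 𝒜] [MonoidalCategory 𝒜] {C C' X Y : 𝒜}
  {ε : C ⟶ 𝟙_ 𝒜} {ε' : C' ⟶ 𝟙_ 𝒜}

namespace RightCProjective

theorem exists_comp_eq (h : RightCProjective C ε X) (f : X ⟶ 𝟙_ 𝒜) :
    ∃ ν : X ⟶ C, ν ≫ ε = f := by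
  obtain ⟨a, ha⟩ := h
  refine ⟨a ≫ (f ▷ C) ≫ (λ_ C).hom, ?_⟩
  calc (a ≫ (f ▷ C) ≫ (λ_ C).hom) ≫ ε
      = (a ≫ (X ◁ ε) ≫ (ρ_ X).hom) ≫ f := by
        simp only [assoc]
        rw [← leftUnitor_naturality, ← whisker_exchange_assoc, unitors_equal,
          rightUnitor_naturality]
    _ = f := by rw [ha, id_comp]

theorem whiskerLeft (Z : 𝒜) (h : RightCProjective C ε X) : RightCProjective C ε (Z ⊗ X) := by
  obtain ⟨a, ha⟩ := h
  refine ⟨(Z ◁ a) ≫ (α_ Z X C).inv, ?_⟩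
  rw [assoc, ← associator_inv_naturality_right_assoc, ← whiskerLeft_rightUnitor,
    ← whiskerLeft_comp, ← whiskerLeft_comp, ha, whiskerLeft_id]

theorem of_isRetractOf (hXY : IsRetractOf X Y) (h : RightCProjective C ε Y) :
    RightCProjective C ε X := by
  obtain ⟨σ, π, hσπ⟩ := hXY
  obtain ⟨a, ha⟩ := h
  refine ⟨σ ≫ a ≫ (π ▷ C), ?_⟩
  simp only [assoc, ← whisker_exchange_assoc, rightUnitor_naturality]
  rw [reassoc_of% ha, hσπ]

theorem of_comp_eq (h : RightCProjective C' ε' X) (ν : C' ⟶ C) (hν : ν ≫ ε = ε') :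
    RightCProjective C ε X := by
  obtain ⟨a, ha⟩ := h
  exact ⟨a ≫ (X ◁ ν), by rw [assoc, ← MonoidalCategory.whiskerLeft_comp_assoc, hν, ha]⟩

theorem leqL (h : RightCProjective C ε X) : leqL X C := by
  obtain ⟨a, ha⟩ := h
  exact ⟨X, a, (X ◁ ε) ≫ (ρ_ X).hom, ha⟩

end RightCProjective

namespace LeftCProjective

theorem exists_comp_eq (h : LeftCProjective C ε X) (f : X ⟶ 𝟙_ 𝒜) :
    ∃ ν : X ⟶ C, ν ≫ ε = f := by
  obtain ⟨a, ha⟩ := h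
  refine ⟨a ≫ (C ◁ f) ≫ (ρ_ C).hom, ?_⟩
  calc (a ≫ (C ◁ f) ≫ (ρ_ C).hom) ≫ ε
      = (a ≫ (ε ▷ X) ≫ (λ_ X).hom) ≫ f := by
        simp only [assoc]
        rw [← rightUnitor_naturality, whisker_exchange_assoc, ← unitors_equal,
          leftUnitor_naturality]
    _ = f := by rw [ha, id_comp]

theorem whiskerRight (h : LeftCProjective C ε X) (Z : 𝒜) : LeftCProjective C ε (X ⊗ Z) := by
  obtain ⟨a, ha⟩ := h
  refine ⟨(a ▷ Z) ≫ (α_ C X Z).hom, ?_⟩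
  rw [assoc, ← associator_naturality_left_assoc, ← leftUnitor_whiskerRight,
    ← comp_whiskerRight, ← comp_whiskerRight, ha, id_whiskerRight]

theorem of_isRetractOf (hXY : IsRetractOf X Y) (h : LeftCProjective C ε Y) :
    LeftCProjective C ε X := by
  obtain ⟨σ, π, hσπ⟩ := hXY
  obtain ⟨a, ha⟩ := h
  refine ⟨σ ≫ a ≫ (C ◁ π), ?_⟩
  simp only [assoc, whisker_exchange_assoc, leftUnitor_naturality]
  rw [reassoc_of% ha, hσπ]

theorem of_comp_eq (h : LeftCProjective C' ε' X) (ν : C' ⟶ C) (hν : ν ≫ ε = ε') :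
    LeftCProjective C ε X := by
  obtain ⟨a, ha⟩ := h
  exact ⟨a ≫ (ν ▷ X), by rw [assoc, ← comp_whiskerRight_assoc, hν, ha]⟩

theorem leqR (h : LeftCProjective C ε X) : leqR X C := by
  obtain ⟨a, ha⟩ := h
  exact ⟨X, a, (ε ▷ X) ≫ (λ_ X).hom, ha⟩

end LeftCProjective

theorem leqL_iff_exists_comp_eq (h' : RightCProjective C' ε' C') (h : RightCProjective C ε C) :
    leqL C' C ↔ ∃ ν : C' ⟶ C, ν ≫ ε = ε' := by
  refine ⟨fun ⟨Z, hZ⟩ => ?_, fun ⟨ν, hν⟩ => (h'.of_comp_eq ν hν).leqL⟩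
  exact ((h.whiskerLeft Z).of_isRetractOf hZ).exists_comp_eq ε'

theorem leqR_iff_exists_comp_eq (h' : LeftCProjective C' ε' C') (h : LeftCProjective C ε C) :
    leqR C' C ↔ ∃ ν : C' ⟶ C, ν ≫ ε = ε' := by
  refine ⟨fun ⟨Z, hZ⟩ => ?_, fun ⟨ν, hν⟩ => (h'.of_comp_eq ν hν).leqR⟩
  exact ((h.whiskerRight Z).of_isRetractOf hZ).exists_comp_eq ε'

end CProjective

theorem stmt_1_general {𝒜 : Type*} [Category 𝒜] [MonoidalCategory 𝒜]
    (C₁ C₂ : 𝒜) (ε₁ : C₁ ⟶ 𝟙_ 𝒜) (ε₂ : C₂ ⟶ 𝟙_ 𝒜)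
    (h₁ : IsCounital C₁ ε₁) (h₂ : IsCounital C₂ ε₂) :
    (leqL C₁ C₂ ↔ leqR C₁ C₂) ∧
    (leqL C₁ C₂ ↔ ∃ ν : C₁ ⟶ C₂, ν ≫ ε₂ = ε₁) := by
  have hL : leqL C₁ C₂ ↔ ∃ ν : C₁ ⟶ C₂, ν ≫ ε₂ = ε₁ := leqL_iff_exists_comp_eq h₁.2 h₂.2
  have hR : leqR C₁ C₂ ↔ ∃ ν : C₁ ⟶ C₂, ν ≫ ε₂ = ε₁ := leqR_iff_exists_comp_eq h₁.1 h₂.1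
  exact ⟨hL.trans hR.symm, hL⟩

/-- Lemma 2.6 (`lemma:counitorder`): for counital objects `(C₁, ε₁)` and `(C₂, ε₂)`,
the conditions `C₁ ≤_L C₂`, `C₁ ≤_R C₂`, and "`ε₁` factors through `ε₂`" are equivalent. -/
theorem stmt_1 {𝒜 : Type*} [Category 𝒜] [MonoidalCategory 𝒜] [Preadditive 𝒜]
    [MonoidalPreadditive 𝒜] (C₁ C₂ : 𝒜) (ε₁ : C₁ ⟶ 𝟙_ 𝒜) (ε₂ : C₂ ⟶ 𝟙_ 𝒜)
    (h₁ : IsCounital C₁ ε₁) (h₂ : IsCounital C₂ ε₂) :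
    (leqL C₁ C₂ ↔ leqR C₁ C₂) ∧
    (leqL C₁ C₂ ↔ ∃ ν : C₁ ⟶ C₂, ν ≫ ε₂ = ε₁) :=
  stmt_1_general C₁ C₂ ε₁ ε₂ h₁ h₂
end

section
/- For all n ≥ 2 and all l with 2 ≤ l ≤ n, the composite (id_{l−1} ⋆ ε ⋆ id_{n−l}) ∘ e_n : C^{⋆n} → C^{⋆(n−1)} is zero. -/
open CategoryTheory Category Limits MonoidalCategory ZeroObject

noncomputable section

variable {𝒜 : Type*} [Category 𝒜] [MonoidalCategory 𝒜] [Preadditive 𝒜] [MonoidalPreadditive 𝒜]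

/-- `Cpow C n` is the `n`-fold tensor power `C^{⋆n}`, with `C^{⋆0} = 𝟙` and `C^{⋆1} = C`. -/
def Cpow (C : 𝒜) : ℕ → 𝒜
  | 0 => 𝟙_ 𝒜
  | 1 => C
  | (n+2) => C ⊗ Cpow C (n+1)

/-- `epsAt C ε n i : C^{⋆(n+1)} ⟶ C^{⋆n}` is `id^{⋆i} ⋆ ε ⋆ id^{⋆(n-i)}`,
applying `ε` to the (0-based) `i`-th tensor factor (and `0` if `i > n`). -/
def epsAt (C : 𝒜) (ε : C ⟶ 𝟙_ 𝒜) : (n i : ℕ) → (Cpow C (n+1) ⟶ Cpow C n)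
  | 0, 0 => ε
  | 0, (_+1) => 0
  | (n+1), 0 => (ε ▷ Cpow C (n+1)) ≫ (λ_ (Cpow C (n+1))).hom
  | 1, 1 => (C ◁ ε) ≫ (ρ_ C).hom
  | 1, (_+2) => 0
  | (n+2), (i+1) => C ◁ epsAt C ε (n+1) i

/-- `epsAtPos C ε n l : C^{⋆n} ⟶ C^{⋆(n-1)}` is `id^{⋆(l-1)} ⋆ ε ⋆ id^{⋆(n-l)}`,
applying `ε` to the (1-based) `l`-th tensor factor. -/
def epsAtPos (C : 𝒜) (ε : C ⟶ 𝟙_ 𝒜) : (n l : ℕ) → (Cpow C n ⟶ Cpow C (n-1))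
  | 0, _ => 0
  | (m+1), l => epsAt C ε m (l-1)

/-- `Dfront C Δ n : C^{⋆(n+1)} ⟶ C^{⋆(n+2)}` is `Δ ⋆ id^{⋆n}`,
applying `Δ` to the front tensor factor. -/
def Dfront (C : 𝒜) (Δ : C ⟶ C ⊗ C) : (n : ℕ) → (Cpow C (n+1) ⟶ Cpow C (n+2))
  | 0 => Δ
  | (n+1) => (Δ ▷ Cpow C (n+1)) ≫ (α_ C C (Cpow C (n+1))).hom

/-- The endomorphisms `e_n ∈ End(C^{⋆n})` of Definition 4.1: `e_0 = e_1 = id`,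
`e_2 = id_2 − Δ ∘ (id_1 ⋆ ε)`, and
`e_n = (e_2 ⋆ id_{n-2}) ∘ (id_1 ⋆ e_2 ⋆ id_{n-3}) ∘ ⋯ ∘ (id_{n-2} ⋆ e_2)`,
expressed via the equivalent recursion `e_{n+2} = (e_2 ⋆ id_n) ∘ (id_1 ⋆ e_{n+1})`. -/
def eIdem (C : 𝒜) (ε : C ⟶ 𝟙_ 𝒜) (Δ : C ⟶ C ⊗ C) : (n : ℕ) → (Cpow C n ⟶ Cpow C n)
  | 0 => 𝟙 _
  | 1 => 𝟙 _
  | (n+2) => (C ◁ eIdem C ε Δ (n+1)) ≫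
      (𝟙 (Cpow C (n+2)) - (epsAt C ε (n+1) 1 ≫ Dfront C Δ n))

end

/-!
In diagrammatic order `e_{n+2} = (id ⋆ e_{n+1}) ≫ (e₂ ⋆ id_n)` with
`e₂ ⋆ id_n = 𝟙 - (id ⋆ ε ⋆ id_n) ≫ (Δ ⋆ id_n)`. Applying `ε` in position 2 kills this factor,
because `(Δ ⋆ id_n) ≫ (id ⋆ ε ⋆ id_n) = 𝟙` by the right counit axiom. Applying `ε` in a position
`l ≥ 3` commutes past the factor, since it acts on a tensor factor that `e₂ ⋆ id_n` does not touch,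
and then meets `id ⋆ e_{n+1}` as `ε` in position `l - 1` of `e_{n+1}`, which vanishes by induction.
-/

section Whiskering

variable {𝒜 : Type*} [Category 𝒜] [MonoidalCategory 𝒜] {C : 𝒜}

def counitLeft (ε : C ⟶ 𝟙_ 𝒜) (X : 𝒜) : C ⊗ X ⟶ X := (ε ▷ X) ≫ (λ_ X).hom

def comulLeft (Δ : C ⟶ C ⊗ C) (X : 𝒜) : C ⊗ X ⟶ C ⊗ (C ⊗ X) := (Δ ▷ X) ≫ (α_ C C X).hom

variable (ε : C ⟶ 𝟙_ 𝒜) (Δ : C ⟶ C ⊗ C)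

lemma counitLeft_naturality {X Y : 𝒜} (f : X ⟶ Y) :
    counitLeft ε X ≫ f = (C ◁ f) ≫ counitLeft ε Y := by
  rw [counitLeft, counitLeft, assoc, ← leftUnitor_naturality, ← whisker_exchange_assoc]

lemma comulLeft_naturality {X Y : 𝒜} (f : X ⟶ Y) :
    comulLeft Δ X ≫ (C ◁ C ◁ f) = (C ◁ f) ≫ comulLeft Δ Y := by
  rw [comulLeft, comulLeft, assoc, ← associator_naturality_right, ← whisker_exchange_assoc]

lemma counitLeft_comp_counit : counitLeft ε C ≫ ε = ((C ◁ ε) ≫ (ρ_ C).hom) ≫ ε := by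
  rw [counitLeft, assoc, ← leftUnitor_naturality, assoc, ← rightUnitor_naturality,
    whisker_exchange_assoc, unitors_equal]

lemma comulLeft_comp_whiskerLeft_counitRight :
    comulLeft Δ C ≫ (C ◁ ((C ◁ ε) ≫ (ρ_ C).hom)) = ((C ◁ ε) ≫ (ρ_ C).hom) ≫ Δ := by
  rw [comulLeft, assoc, MonoidalCategory.whiskerLeft_comp, ← associator_naturality_right_assoc,
    ← rightUnitor_tensor_hom, ← whisker_exchange_assoc, rightUnitor_naturality, assoc]

lemma comulLeft_comp_whiskerLeft_counitLeft (hΔ : Δ ≫ (C ◁ ε) ≫ (ρ_ C).hom = 𝟙 C) (X : 𝒜) :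
    comulLeft Δ X ≫ (C ◁ counitLeft ε X) = 𝟙 (C ⊗ X) := by
  rw [comulLeft, counitLeft, MonoidalCategory.whiskerLeft_comp, assoc,
    ← associator_naturality_middle_assoc, MonoidalCategory.triangle, ← comp_whiskerRight_assoc,
    ← comp_whiskerRight, assoc, hΔ, MonoidalCategory.id_whiskerRight]

end Whiskering

section Idempotents

variable {𝒜 : Type*} [Category 𝒜] [MonoidalCategory 𝒜] [Preadditive 𝒜]
  (C : 𝒜) (ε : C ⟶ 𝟙_ 𝒜) (Δ : C ⟶ C ⊗ C)

lemma epsAt_one_succ_succ (i : ℕ) : epsAt C ε 1 (i + 2) = 0 := rfl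

lemma epsAt_succ_succ (n i : ℕ) : epsAt C ε (n + 2) (i + 1) = C ◁ epsAt C ε (n + 1) i := by
  cases i <;> rfl

lemma whiskerLeft_comp_epsAt_succ_succ {X : 𝒜} {n : ℕ} (f : X ⟶ Cpow C (n + 2)) (i : ℕ) :
    (C ◁ f) ≫ epsAt C ε (n + 2) (i + 1) = C ◁ (f ≫ epsAt C ε (n + 1) i) := by
  rw [epsAt_succ_succ]
  exact (MonoidalCategory.whiskerLeft_comp _ _ _).symm

lemma whiskerLeft_comp_epsAt_succ_succ_comp {X Y : 𝒜} {n : ℕ} (f : X ⟶ Cpow C (n + 2)) (i : ℕ)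
    (g : Cpow C (n + 2) ⟶ Y) :
    (C ◁ f) ≫ (epsAt C ε (n + 2) (i + 1) ≫ g : Cpow C (n + 3) ⟶ Y) =
      C ◁ (f ≫ epsAt C ε (n + 1) i) ≫ g := by
  rw [← whiskerLeft_comp_epsAt_succ_succ]
  exact (assoc _ _ _).symm

lemma epsAt_succ_succ_comp_epsAt_succ_succ (n i j : ℕ) :
    epsAt C ε (n + 3) (i + 1) ≫ epsAt C ε (n + 2) (j + 1) =
      C ◁ (epsAt C ε (n + 2) i ≫ epsAt C ε (n + 1) j) := by
  rw [epsAt_succ_succ C ε (n + 1)]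
  exact whiskerLeft_comp_epsAt_succ_succ C ε _ j

lemma epsAt_zero_comp_epsAt [MonoidalPreadditive 𝒜] (n m : ℕ) :
    epsAt C ε (n + 1) 0 ≫ epsAt C ε n m = epsAt C ε (n + 1) (m + 1) ≫ epsAt C ε n 0 := by
  cases n with
  | zero =>
    cases m with
    | zero => exact counitLeft_comp_counit ε
    | succ m => exact comp_zero.trans (by rw [epsAt_one_succ_succ, zero_comp])
  | succ n =>
    rw [epsAt_succ_succ]
    exact counitLeft_naturality ε _

lemma epsAt_one_comp_epsAt_succ [MonoidalPreadditive 𝒜] (n m : ℕ) :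
    epsAt C ε (n + 2) 1 ≫ epsAt C ε (n + 1) (m + 1) =
      epsAt C ε (n + 2) (m + 2) ≫ epsAt C ε (n + 1) 1 := by
  cases n with
  | zero =>
    cases m with
    | zero =>
      show C ◁ counitLeft ε C ≫ C ◁ ε ≫ (ρ_ C).hom =
        C ◁ ((C ◁ ε) ≫ (ρ_ C).hom) ≫ C ◁ ε ≫ (ρ_ C).hom
      rw [← MonoidalCategory.whiskerLeft_comp_assoc, ← MonoidalCategory.whiskerLeft_comp_assoc,
        counitLeft_comp_counit]
    | succ m =>
      rw [epsAt_one_succ_succ, comp_zero, epsAt_succ_succ, epsAt_one_succ_succ,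
        MonoidalPreadditive.whiskerLeft_zero]
      exact zero_comp.symm
  | succ n =>
    rw [epsAt_succ_succ_comp_epsAt_succ_succ, epsAt_succ_succ_comp_epsAt_succ_succ,
      epsAt_zero_comp_epsAt]

lemma dfront_succ_comp_epsAt [MonoidalPreadditive 𝒜] (n i : ℕ) :
    Dfront C Δ (n + 1) ≫ epsAt C ε (n + 2) (i + 2) = epsAt C ε (n + 1) (i + 1) ≫ Dfront C Δ n := by
  rw [epsAt_succ_succ C ε n (i + 1)]
  cases n with
  | zero =>
    cases i with
    | zero => exact comulLeft_comp_whiskerLeft_counitRight ε Δ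
    | succ i =>
      rw [epsAt_one_succ_succ, MonoidalPreadditive.whiskerLeft_zero]
      exact comp_zero.trans zero_comp.symm
  | succ n =>
    rw [epsAt_succ_succ C ε n i]
    exact comulLeft_naturality Δ _

lemma dfront_comp_epsAt_one (hΔ : Δ ≫ (C ◁ ε) ≫ (ρ_ C).hom = 𝟙 C) (n : ℕ) :
    Dfront C Δ n ≫ epsAt C ε (n + 1) 1 = 𝟙 _ := by
  cases n with
  | zero => exact hΔ
  | succ n => exact comulLeft_comp_whiskerLeft_counitLeft ε Δ hΔ _

/-- `e₂ ⋆ id_n`. -/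
def eTwoFront (n : ℕ) : Cpow C (n + 2) ⟶ Cpow C (n + 2) :=
  𝟙 _ - epsAt C ε (n + 1) 1 ≫ Dfront C Δ n

-- The ascription makes the inner composite start at `Cpow C (n + 2)`, not at the defeq
-- `C ⊗ Cpow C (n + 1)`; otherwise the lemmas about `eTwoFront` do not rewrite it.
lemma eIdem_add_two_comp {Y : 𝒜} (n : ℕ) (g : Cpow C (n + 2) ⟶ Y) :
    eIdem C ε Δ (n + 2) ≫ g =
      (C ◁ eIdem C ε Δ (n + 1)) ≫ (eTwoFront C ε Δ n ≫ g : Cpow C (n + 2) ⟶ Y) :=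
  assoc _ _ _

lemma eTwoFront_comp_epsAt_one (hΔ : Δ ≫ (C ◁ ε) ≫ (ρ_ C).hom = 𝟙 C) (n : ℕ) :
    eTwoFront C ε Δ n ≫ epsAt C ε (n + 1) 1 = 0 := by
  rw [eTwoFront, Preadditive.sub_comp, assoc, dfront_comp_epsAt_one C ε Δ hΔ, id_comp, comp_id,
    sub_self]

lemma eTwoFront_comp_epsAt_succ_succ [MonoidalPreadditive 𝒜] (n m : ℕ) :
    eTwoFront C ε Δ (n + 1) ≫ epsAt C ε (n + 2) (m + 2) =
      epsAt C ε (n + 2) (m + 2) ≫ eTwoFront C ε Δ n := by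
  rw [eTwoFront, eTwoFront, Preadditive.sub_comp, Preadditive.comp_sub, assoc,
    dfront_succ_comp_epsAt, reassoc_of% epsAt_one_comp_epsAt_succ, id_comp, comp_id]

theorem eIdem_comp_epsAt_succ [MonoidalPreadditive 𝒜] (hΔ : Δ ≫ (C ◁ ε) ≫ (ρ_ C).hom = 𝟙 C) :
    ∀ n m, eIdem C ε Δ (n + 2) ≫ epsAt C ε (n + 1) (m + 1) = 0
  | n, 0 => by
    rw [eIdem_add_two_comp, eTwoFront_comp_epsAt_one C ε Δ hΔ]
    exact comp_zero
  | 0, m + 1 => (congrArg _ (epsAt_one_succ_succ C ε m)).trans comp_zero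
  | n + 1, m + 1 => by
    rw [eIdem_add_two_comp, eTwoFront_comp_epsAt_succ_succ,
      whiskerLeft_comp_epsAt_succ_succ_comp, eIdem_comp_epsAt_succ hΔ n m,
      MonoidalPreadditive.whiskerLeft_zero]
    exact zero_comp

end Idempotents

/-- Lemma 4.2 (`lemma:en kills ep`): `(id_{l−1} ⋆ ε ⋆ id_{n−l}) ∘ e_n = 0` for `2 ≤ l ≤ n`,
assuming only the right counit axiom. -/
theorem stmt_3 {𝒜 : Type*} [Category 𝒜] [MonoidalCategory 𝒜] [Preadditive 𝒜]
    [MonoidalPreadditive 𝒜] (C : 𝒜) (ε : C ⟶ 𝟙_ 𝒜) (Δ : C ⟶ C ⊗ C)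
    (hΔ : Δ ≫ (C ◁ ε) ≫ (ρ_ C).hom = 𝟙 C) (n l : ℕ) (hl : 2 ≤ l) (hn : l ≤ n) :
    eIdem C ε Δ n ≫ epsAtPos C ε n l = 0 := by
  obtain ⟨m, rfl⟩ : ∃ m, l = m + 2 := ⟨l - 2, by omega⟩
  obtain ⟨k, rfl⟩ : ∃ k, n = k + 2 := ⟨n - 2, by omega⟩
  exact eIdem_comp_epsAt_succ C ε Δ hΔ k m
end

section
/- Left e_n absorption: let D, E, F ∈ 𝒜, n ≥ 0, and let f : D → E ⋆ C^{⋆n} ⋆ F be a morphism such that (id_E ⋆ (id_{l−1} ⋆ ε ⋆ id_{n−l}) ⋆ id_F) ∘ f = 0 for all 2 ≤ l ≤ n. Then (id_E ⋆ e_n ⋆ id_F) ∘ f = f. -/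
open CategoryTheory Category Limits MonoidalCategory ZeroObject

/-! Writing composition diagrammatically,
`e_{n+2} = (id_1 ⋆ e_{n+1}) ≫ (id − (id_1 ⋆ ε ⋆ id_n) ≫ (Δ ⋆ id_n))`.
Moving the first factor of `C^{⋆(n+2)} = C ⋆ C^{⋆(n+1)}` into `E`, the hypotheses on `f` at the
positions `3, …, n+2` become those for `C^{⋆(n+1)}` with `E ⋆ C` in place of `E`, so
`f ≫ (id_1 ⋆ e_{n+1}) = f` by induction; the hypothesis at position `2` then kills the correction
term. -/

section Absorption

variable {𝒜 : Type*} [Category 𝒜] [MonoidalCategory 𝒜]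

section Regroup

variable {D E C X Y F : 𝒜}

def frontToLeftIso (E C X F : 𝒜) : E ⊗ ((C ⊗ X) ⊗ F) ≅ (E ⊗ C) ⊗ (X ⊗ F) :=
  whiskerLeftIso E (α_ C X F) ≪≫ (α_ E C (X ⊗ F)).symm

lemma comp_whiskerLeft_whiskerRight_whiskerLeft (f : D ⟶ E ⊗ ((C ⊗ X) ⊗ F)) (g : X ⟶ Y) :
    f ≫ E ◁ ((C ◁ g) ▷ F) =
      (f ≫ (frontToLeftIso E C X F).hom) ≫ (E ⊗ C) ◁ (g ▷ F) ≫ (frontToLeftIso E C Y F).inv := by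
  simp only [frontToLeftIso, Iso.trans_hom, Iso.trans_inv, whiskerLeftIso_hom, whiskerLeftIso_inv,
    Iso.symm_hom, Iso.symm_inv, assoc]
  congr 1
  monoidal

lemma comp_whiskerLeft_whiskerRight_whiskerLeft_eq_self (f : D ⟶ E ⊗ ((C ⊗ X) ⊗ F))
    {e : X ⟶ X} (he : (f ≫ (frontToLeftIso E C X F).hom) ≫ (E ⊗ C) ◁ (e ▷ F) =
      f ≫ (frontToLeftIso E C X F).hom) :
    f ≫ E ◁ ((C ◁ e) ▷ F) = f := by
  rw [comp_whiskerLeft_whiskerRight_whiskerLeft, ← assoc, he, assoc, Iso.hom_inv_id, comp_id]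

lemma comp_frontToLeftIso_hom_whiskerLeft_whiskerRight_eq_zero [Preadditive 𝒜]
    (f : D ⟶ E ⊗ ((C ⊗ X) ⊗ F)) {g : X ⟶ Y} (hg : f ≫ E ◁ ((C ◁ g) ▷ F) = 0) :
    (f ≫ (frontToLeftIso E C X F).hom) ≫ (E ⊗ C) ◁ (g ▷ F) = 0 := by
  rwa [comp_whiskerLeft_whiskerRight_whiskerLeft, ← assoc, Iso.comp_inv_eq, zero_comp] at hg

end Regroup

variable [Preadditive 𝒜]

lemma epsAtPos_add_three_succ (C : 𝒜) (ε : C ⟶ 𝟙_ 𝒜) (n : ℕ) {l : ℕ} (hl : 1 ≤ l) :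
    epsAtPos C ε (n + 3) (l + 1) = C ◁ epsAtPos C ε (n + 2) l := by
  obtain ⟨i, rfl⟩ := Nat.exists_eq_add_of_le' hl
  cases i <;> rfl

variable [MonoidalPreadditive 𝒜]

lemma comp_whiskerLeft_eIdem_add_two_whiskerRight (C : 𝒜) (ε : C ⟶ 𝟙_ 𝒜) (Δ : C ⟶ C ⊗ C)
    {D E F : 𝒜} {n : ℕ} (f : D ⟶ E ⊗ (Cpow C (n + 2) ⊗ F))
    (hf : f ≫ E ◁ ((C ◁ eIdem C ε Δ (n + 1)) ▷ F) = f)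
    (hε : f ≫ E ◁ (epsAt C ε (n + 1) 1 ▷ F) = 0) :
    f ≫ E ◁ (eIdem C ε Δ (n + 2) ▷ F) = f := by
  let W := tensorRight F ⋙ tensorLeft E
  change f ≫ W.map (C ◁ eIdem C ε Δ (n + 1) ≫ (𝟙 _ - epsAt C ε (n + 1) 1 ≫ Dfront C Δ n)) = f
  erw [W.map_comp, reassoc_of% hf, W.map_sub, W.map_comp, Preadditive.comp_sub, reassoc_of% hε,
    W.map_id, zero_comp, sub_zero, comp_id]

end Absorption

theorem stmt_4_general {𝒜 : Type*} [Category 𝒜] [MonoidalCategory 𝒜] [Preadditive 𝒜]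
    [MonoidalPreadditive 𝒜] (C : 𝒜) (ε : C ⟶ 𝟙_ 𝒜) (Δ : C ⟶ C ⊗ C)
    (D E F : 𝒜) (n : ℕ)
    (f : D ⟶ E ⊗ (Cpow C n ⊗ F))
    (hf : ∀ l, 2 ≤ l → l ≤ n → f ≫ (E ◁ (epsAtPos C ε n l ▷ F)) = 0) :
    f ≫ (E ◁ (eIdem C ε Δ n ▷ F)) = f := by
  induction n generalizing E with
  | zero => simp [eIdem]
  | succ n ih =>
    obtain _ | n := n
    · simp [eIdem]
    refine comp_whiskerLeft_eIdem_add_two_whiskerRight C ε Δ f ?_ (hf 2 le_rfl (by omega))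
    refine comp_whiskerLeft_whiskerRight_whiskerLeft_eq_self f (ih _ _ fun l hl hln ↦ ?_)
    obtain _ | n := n
    · omega
    refine comp_frontToLeftIso_hom_whiskerLeft_whiskerRight_eq_zero f ?_
    rw [← epsAtPos_add_three_succ C ε n (by omega)]
    exact hf (l + 1) (by omega) (by omega)

/-- Lemma 4.3 (left `e_n` absorption): if `f : D ⟶ E ⋆ C^{⋆n} ⋆ F` is annihilated by
`id_E ⋆ (id_{l−1} ⋆ ε ⋆ id_{n−l}) ⋆ id_F` for all `2 ≤ l ≤ n`, then
`(id_E ⋆ e_n ⋆ id_F) ∘ f = f`, assuming only the right counit axiom. -/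
theorem stmt_4 {𝒜 : Type*} [Category 𝒜] [MonoidalCategory 𝒜] [Preadditive 𝒜]
    [MonoidalPreadditive 𝒜] (C : 𝒜) (ε : C ⟶ 𝟙_ 𝒜) (Δ : C ⟶ C ⊗ C)
    (hΔ : Δ ≫ (C ◁ ε) ≫ (ρ_ C).hom = 𝟙 C) (D E F : 𝒜) (n : ℕ)
    (f : D ⟶ E ⊗ (Cpow C n ⊗ F))
    (hf : ∀ l, 2 ≤ l → l ≤ n → f ≫ (E ◁ (epsAtPos C ε n l ▷ F)) = 0) :
    f ≫ (E ◁ (eIdem C ε Δ n ▷ F)) = f :=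
  stmt_4_general C ε Δ D E F n f hf
end

section
/- For n ≥ 1 define π := (id_C ⋆ ε ⋆ id_{n−1}) ∘ (id_1 ⋆ e_n) : C^{⋆(n+1)} → C^{⋆n} and σ := (Δ ⋆ id_{n−1}) ∘ e_n : C^{⋆n} → C^{⋆(n+1)}. Then e_n ∘ π = π, σ ∘ e_n = σ, (id_1 ⋆ e_n) ∘ σ = σ, π ∘ σ = e_n, and (id_1 ⋆ e_n) − σ ∘ π = e_{n+1}. Consequently, in the Karoubi envelope of 𝒜 (in particular in 𝒜 itself when 𝒜 is idempotent complete), there is an isomorphism C ⋆ im(e_n) ≅ im(e_{n+1}) ⊕ im(e_n). -/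
open CategoryTheory Category Limits MonoidalCategory ZeroObject

/-!
Write `t` for `ε` on the second factor and `D` for `Δ` on the first, so that `D ≫ t = 𝟙` by the
counit axiom. Then `π = (C ◁ e_n) ≫ t` and `σ = e_n ≫ D` exhibit `im e_n` as a retract of
`C ⋆ im e_n` (`σ ≫ π = e_n`), and in any preadditive category such a retract splits off with
complement `C ◁ e_n - π ≫ σ`. The recursion `e_{n+1} = (C ◁ e_n) ≫ (𝟙 - t ≫ D)` says that `e_{n+1}`
is exactly this complement; being a complement, it absorbs `C ◁ e_n` and kills `t`,
which is what lets the retract identities pass from `n` to `n + 1`.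
-/

namespace CategoryTheory

open Idempotents

variable {𝒞 : Type*} [Category 𝒞] {X Z : 𝒞}

/-- `π` and `σ` restrict to morphisms `im p ⟶ im e` and `im e ⟶ im p` with `π ∘ σ = id`. -/
structure IsImageRetract (p : X ⟶ X) (e : Z ⟶ Z) (π : X ⟶ Z) (σ : Z ⟶ X) : Prop where
  idem : p ≫ p = p
  comp_π : p ≫ π = π
  π_comp : π ≫ e = π
  comp_σ : e ≫ σ = σ
  σ_comp : σ ≫ p = σ
  σ_π : σ ≫ π = e

lemma IsImageRetract.of_section {p : X ⟶ X} {e : Z ⟶ Z} {t : X ⟶ Z} {D : Z ⟶ X}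
    (hp : p ≫ p = p) (he : e ≫ e = e) (hDt : D ≫ t = 𝟙 Z)
    (hpte : p ≫ t ≫ e = p ≫ t) (heDp : e ≫ D ≫ p = e ≫ D) :
    IsImageRetract p e (p ≫ t) (e ≫ D) where
  idem := hp
  comp_π := by rw [reassoc_of% hp]
  π_comp := by rw [assoc, hpte]
  comp_σ := by rw [reassoc_of% he]
  σ_comp := by rw [assoc, heDp]
  σ_π := by rw [assoc, reassoc_of% heDp, hDt, comp_id]

namespace IsImageRetract

variable {p : X ⟶ X} {e : Z ⟶ Z} {π : X ⟶ Z} {σ : Z ⟶ X}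

lemma idem_right (h : IsImageRetract p e π σ) : e ≫ e = e := by
  calc e ≫ e = e ≫ σ ≫ π := by rw [h.σ_π]
    _ = e := by rw [reassoc_of% h.comp_σ, h.σ_π]

variable [Preadditive 𝒞]

lemma sub_comp_self (h : IsImageRetract p e π σ) : (p - π ≫ σ) ≫ p = p - π ≫ σ := by
  rw [Preadditive.sub_comp, h.idem, assoc, h.σ_comp]

lemma self_comp_sub (h : IsImageRetract p e π σ) : p ≫ (p - π ≫ σ) = p - π ≫ σ := by
  rw [Preadditive.comp_sub, h.idem, reassoc_of% h.comp_π]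

lemma sub_idem (h : IsImageRetract p e π σ) :
    (p - π ≫ σ) ≫ (p - π ≫ σ) = p - π ≫ σ := by
  simp only [Preadditive.sub_comp, Preadditive.comp_sub, assoc, h.idem, reassoc_of% h.comp_π,
    h.σ_comp, reassoc_of% h.σ_π, h.comp_σ]
  abel

lemma sub_comp_π (h : IsImageRetract p e π σ) : (p - π ≫ σ) ≫ π = 0 := by
  rw [Preadditive.sub_comp, h.comp_π, assoc, h.σ_π, h.π_comp, sub_self]

lemma σ_comp_sub (h : IsImageRetract p e π σ) : σ ≫ (p - π ≫ σ) = 0 := by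
  rw [Preadditive.comp_sub, h.σ_comp, reassoc_of% h.σ_π, h.comp_σ, sub_self]

noncomputable def karoubiIso [HasBinaryBiproducts (Karoubi 𝒞)] (h : IsImageRetract p e π σ)
    {q : X ⟶ X} (hq : p - π ≫ σ = q) :
    Karoubi.mk X p h.idem ≅ Karoubi.mk X q (hq ▸ h.sub_idem) ⊞ Karoubi.mk Z e h.idem_right := by
  subst hq
  refine biprod.uniqueUpToIso _ _ (isBinaryBilimitOfTotal
    { pt := Karoubi.mk X p h.idem
      fst := Karoubi.Hom.mk (p - π ≫ σ) (by dsimp only; rw [h.sub_idem, h.self_comp_sub])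
      snd := Karoubi.Hom.mk π (by rw [reassoc_of% h.comp_π, h.π_comp])
      inl := Karoubi.Hom.mk (p - π ≫ σ) (by dsimp only; rw [h.sub_comp_self, h.sub_idem])
      inr := Karoubi.Hom.mk σ (by rw [reassoc_of% h.comp_σ, h.σ_comp])
      inl_fst := Karoubi.hom_ext _ _ h.sub_idem
      inl_snd := Karoubi.hom_ext _ _ h.sub_comp_π
      inr_fst := Karoubi.hom_ext _ _ h.σ_comp_sub
      inr_snd := Karoubi.hom_ext _ _ h.σ_π } ?_)
  exact Karoubi.hom_ext _ _ (by dsimp; rw [h.sub_idem, sub_add_cancel])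

end IsImageRetract

end CategoryTheory

-- so that rewriting sees `Cpow C (n+2)` as `C ⊗ Cpow C (n+1)`
attribute [reducible] Cpow

section Dfront

variable {𝒜 : Type*} [Category 𝒜] [MonoidalCategory 𝒜] (C : 𝒜) (Δ : C ⟶ C ⊗ C)

lemma Dfront_succ (n : ℕ) :
    Dfront C Δ (n+1) = (Δ ▷ Cpow C (n+1)) ≫ (α_ C C (Cpow C (n+1))).hom := rfl

lemma whiskerLeft_comp_Dfront_succ {m n : ℕ} (f : Cpow C (m+1) ⟶ Cpow C (n+1)) :
    (C ◁ f) ≫ Dfront C Δ (n+1) = Dfront C Δ (m+1) ≫ (C ◁ C ◁ f) := by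
  rw [Dfront_succ, Dfront_succ, whisker_exchange_assoc, associator_naturality_right, assoc]

end Dfront

section epsAt

variable {𝒜 : Type*} [Category 𝒜] [MonoidalCategory 𝒜] [Preadditive 𝒜]
  (C : 𝒜) (ε : C ⟶ 𝟙_ 𝒜) (Δ : C ⟶ C ⊗ C)

lemma epsAt_succ_zero (n : ℕ) :
    epsAt C ε (n+1) 0 = (ε ▷ Cpow C (n+1)) ≫ (λ_ (Cpow C (n+1))).hom := rfl

lemma epsAt_succ_succ_one (n : ℕ) : epsAt C ε (n+2) 1 = C ◁ epsAt C ε (n+1) 0 := rfl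

lemma epsAt_one_one : epsAt C ε 1 1 = (C ◁ ε) ≫ (ρ_ C).hom := rfl

lemma epsAt_succ_zero_naturality {m n : ℕ} (f : Cpow C (m+1) ⟶ Cpow C (n+1)) :
    (C ◁ f) ≫ epsAt C ε (n+1) 0 = epsAt C ε (m+1) 0 ≫ f := by
  rw [epsAt_succ_zero, epsAt_succ_zero, whisker_exchange_assoc, leftUnitor_naturality, assoc]

lemma whiskerLeft_comp_epsAt_succ_succ_one {m n : ℕ} (f : Cpow C (m+1) ⟶ Cpow C (n+1)) :
    (C ◁ C ◁ f) ≫ epsAt C ε (n+2) 1 = epsAt C ε (m+2) 1 ≫ (C ◁ f) := by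
  rw [epsAt_succ_succ_one, epsAt_succ_succ_one, ← whiskerLeft_comp, ← whiskerLeft_comp,
    epsAt_succ_zero_naturality]

lemma epsAt_succ_succ_one_comp_epsAt_one (n : ℕ) :
    epsAt C ε (n+2) 1 ≫ epsAt C ε (n+1) 1 = (C ◁ epsAt C ε (n+1) 1) ≫ epsAt C ε (n+1) 1 := by
  cases n with
  | zero =>
    have hεε : ((ε ▷ C) ≫ (λ_ C).hom) ≫ ε = ((C ◁ ε) ≫ (ρ_ C).hom) ≫ ε := by
      rw [assoc, assoc, ← leftUnitor_naturality, ← rightUnitor_naturality,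
        ← whisker_exchange_assoc, unitors_equal]
    rw [epsAt_succ_succ_one, epsAt_succ_zero, epsAt_one_one, ← whiskerLeft_comp_assoc,
      ← whiskerLeft_comp_assoc, hεε]
  | succ n => exact (whiskerLeft_comp_epsAt_succ_succ_one C ε (epsAt C ε (n+1) 0)).symm

lemma Dfront_comp_epsAt_one (hΔ : Δ ≫ (C ◁ ε) ≫ (ρ_ C).hom = 𝟙 C) :
    ∀ n, Dfront C Δ n ≫ epsAt C ε (n+1) 1 = 𝟙 (Cpow C (n+1))
  | 0 => hΔ
  | n + 1 => by
      rw [Dfront_succ, epsAt_succ_succ_one, epsAt_succ_zero, whiskerLeft_comp, assoc,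
        ← associator_naturality_middle_assoc, triangle, ← comp_whiskerRight_assoc,
        ← comp_whiskerRight, assoc, hΔ, id_whiskerRight]

lemma Dfront_succ_comp_whiskerLeft_epsAt_one (n : ℕ) :
    Dfront C Δ (n+1) ≫ (C ◁ epsAt C ε (n+1) 1) = epsAt C ε (n+1) 1 ≫ Dfront C Δ n := by
  cases n with
  | zero =>
    rw [Dfront_succ, epsAt_one_one, whiskerLeft_comp, assoc, ← associator_naturality_right_assoc,
      whiskerLeft_rightUnitor, Iso.hom_inv_id_assoc, ← whisker_exchange_assoc,
      rightUnitor_naturality, assoc]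
    rfl
  | succ n => exact (whiskerLeft_comp_Dfront_succ C Δ (epsAt C ε (n+1) 0)).symm

end epsAt

section eIdem

variable {𝒜 : Type*} [Category 𝒜] [MonoidalCategory 𝒜] [Preadditive 𝒜]
  {C : 𝒜} {ε : C ⟶ 𝟙_ 𝒜} {Δ : C ⟶ C ⊗ C}

lemma eIdem_succ_succ (n : ℕ) :
    eIdem C ε Δ (n+2) =
    (C ◁ eIdem C ε Δ (n+1)) ≫ (𝟙 _ - epsAt C ε (n+1) 1 ≫ Dfront C Δ n) := rfl

lemma eIdem_succ_succ_eq_sub {n : ℕ}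
    (h : IsImageRetract (C ◁ eIdem C ε Δ (n+1)) (eIdem C ε Δ (n+1))
      ((C ◁ eIdem C ε Δ (n+1)) ≫ epsAt C ε (n+1) 1) (eIdem C ε Δ (n+1) ≫ Dfront C Δ n)) :
    eIdem C ε Δ (n+2) = (C ◁ eIdem C ε Δ (n+1)) -
      ((C ◁ eIdem C ε Δ (n+1)) ≫ epsAt C ε (n+1) 1) ≫ (eIdem C ε Δ (n+1) ≫ Dfront C Δ n) := by
  have hπσ : ((C ◁ eIdem C ε Δ (n+1)) ≫ epsAt C ε (n+1) 1) ≫ (eIdem C ε Δ (n+1) ≫ Dfront C Δ n) =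
      (C ◁ eIdem C ε Δ (n+1)) ≫ epsAt C ε (n+1) 1 ≫ Dfront C Δ n := by
    rw [← assoc, h.π_comp, assoc]
  rw [eIdem_succ_succ, Preadditive.comp_sub, comp_id, hπσ]

variable [MonoidalPreadditive 𝒜]

lemma whiskerLeft_comp_epsAt_comp_eIdem_succ_succ {n : ℕ} {q : Cpow C (n+2) ⟶ Cpow C (n+2)}
    (hqe : q ≫ (C ◁ eIdem C ε Δ (n+1)) = q) (hqt : q ≫ epsAt C ε (n+1) 1 = 0) :
    (C ◁ q) ≫ epsAt C ε (n+2) 1 ≫ eIdem C ε Δ (n+2) = (C ◁ q) ≫ epsAt C ε (n+2) 1 := by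
  have habsorb : (C ◁ q) ≫ epsAt C ε (n+2) 1 ≫ (C ◁ eIdem C ε Δ (n+1)) =
      (C ◁ q) ≫ epsAt C ε (n+2) 1 := by
    rw [← whiskerLeft_comp_epsAt_succ_succ_one, ← whiskerLeft_comp_assoc, hqe]
  have hkill : (C ◁ q) ≫ epsAt C ε (n+2) 1 ≫ epsAt C ε (n+1) 1 = 0 := by
    rw [epsAt_succ_succ_one_comp_epsAt_one, ← whiskerLeft_comp_assoc, hqt,
      MonoidalPreadditive.whiskerLeft_zero, zero_comp]
  rw [eIdem_succ_succ, reassoc_of% habsorb, Preadditive.comp_sub, Preadditive.comp_sub, comp_id,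
    reassoc_of% hkill, zero_comp, sub_zero]

lemma comp_Dfront_comp_whiskerLeft_eIdem_succ_succ {n : ℕ} {q : Cpow C (n+2) ⟶ Cpow C (n+2)}
    (hqe : q ≫ (C ◁ eIdem C ε Δ (n+1)) = q) (hqt : q ≫ epsAt C ε (n+1) 1 = 0) :
    q ≫ Dfront C Δ (n+1) ≫ (C ◁ eIdem C ε Δ (n+2)) = q ≫ Dfront C Δ (n+1) := by
  have habsorb : q ≫ Dfront C Δ (n+1) ≫ (C ◁ C ◁ eIdem C ε Δ (n+1)) = q ≫ Dfront C Δ (n+1) := by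
    rw [← whiskerLeft_comp_Dfront_succ, reassoc_of% hqe]
  have hkill : q ≫ Dfront C Δ (n+1) ≫ (C ◁ epsAt C ε (n+1) 1) = 0 := by
    rw [Dfront_succ_comp_whiskerLeft_epsAt_one, reassoc_of% hqt, zero_comp]
  have hsub : C ◁ (𝟙 (Cpow C (n+2)) - epsAt C ε (n+1) 1 ≫ Dfront C Δ n) =
      𝟙 _ - (C ◁ epsAt C ε (n+1) 1) ≫ (C ◁ Dfront C Δ n) :=
    (tensorLeft C).map_sub.trans (by simp)
  rw [eIdem_succ_succ, whiskerLeft_comp, reassoc_of% habsorb, hsub, Preadditive.comp_sub,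
    Preadditive.comp_sub, comp_id, reassoc_of% hkill, zero_comp, sub_zero]

theorem isImageRetract_eIdem (hΔ : Δ ≫ (C ◁ ε) ≫ (ρ_ C).hom = 𝟙 C) (n : ℕ) :
    IsImageRetract (C ◁ eIdem C ε Δ (n+1)) (eIdem C ε Δ (n+1))
      ((C ◁ eIdem C ε Δ (n+1)) ≫ epsAt C ε (n+1) 1) (eIdem C ε Δ (n+1) ≫ Dfront C Δ n) := by
  induction n with
  | zero =>
    refine .of_section ?_ (comp_id _) (Dfront_comp_epsAt_one C ε Δ hΔ 0) ?_ ?_ <;>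
      simp [eIdem]
  | succ n h =>
    have hq := eIdem_succ_succ_eq_sub h
    have hqe : eIdem C ε Δ (n+2) ≫ (C ◁ eIdem C ε Δ (n+1)) = eIdem C ε Δ (n+2) := by
      rw [hq]; exact h.sub_comp_self
    have hqt : eIdem C ε Δ (n+2) ≫ epsAt C ε (n+1) 1 = 0 := by
      rw [← hqe, assoc, hq]; exact h.sub_comp_π
    have hidem : eIdem C ε Δ (n+2) ≫ eIdem C ε Δ (n+2) = eIdem C ε Δ (n+2) := by
      rw [hq]; exact h.sub_idem
    exact .of_section (by rw [← whiskerLeft_comp, hidem]) hidem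
      (Dfront_comp_epsAt_one C ε Δ hΔ (n+1))
      (whiskerLeft_comp_epsAt_comp_eIdem_succ_succ hqe hqt)
      (comp_Dfront_comp_whiskerLeft_eIdem_succ_succ hqe hqt)

end eIdem

open CategoryTheory.Idempotents in
theorem stmt_5_general {𝒜 : Type*} [Category 𝒜] [MonoidalCategory 𝒜] [Preadditive 𝒜]
    [MonoidalPreadditive 𝒜]
    [HasBinaryBiproducts (CategoryTheory.Idempotents.Karoubi 𝒜)]
    (C : 𝒜) (ε : C ⟶ 𝟙_ 𝒜) (Δ : C ⟶ C ⊗ C)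
    (hΔ : Δ ≫ (C ◁ ε) ≫ (ρ_ C).hom = 𝟙 C) (m : ℕ)
    (h₁ : eIdem C ε Δ (m+1) ≫ eIdem C ε Δ (m+1) = eIdem C ε Δ (m+1))
    (h₂ : eIdem C ε Δ (m+2) ≫ eIdem C ε Δ (m+2) = eIdem C ε Δ (m+2))
    (h₃ : (C ◁ eIdem C ε Δ (m+1)) ≫ (C ◁ eIdem C ε Δ (m+1)) = C ◁ eIdem C ε Δ (m+1)) :
    ((C ◁ eIdem C ε Δ (m+1)) ≫ epsAt C ε (m+1) 1) ≫ eIdem C ε Δ (m+1) =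
        (C ◁ eIdem C ε Δ (m+1)) ≫ epsAt C ε (m+1) 1 ∧
    eIdem C ε Δ (m+1) ≫ (eIdem C ε Δ (m+1) ≫ Dfront C Δ m) =
        eIdem C ε Δ (m+1) ≫ Dfront C Δ m ∧
    (eIdem C ε Δ (m+1) ≫ Dfront C Δ m) ≫ (C ◁ eIdem C ε Δ (m+1)) =
        eIdem C ε Δ (m+1) ≫ Dfront C Δ m ∧
    (eIdem C ε Δ (m+1) ≫ Dfront C Δ m) ≫ ((C ◁ eIdem C ε Δ (m+1)) ≫ epsAt C ε (m+1) 1) =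
        eIdem C ε Δ (m+1) ∧
    (show Cpow C (m+2) ⟶ Cpow C (m+2) from C ◁ eIdem C ε Δ (m+1)) -
        (show Cpow C (m+2) ⟶ Cpow C (m+2) from
          ((C ◁ eIdem C ε Δ (m+1)) ≫ epsAt C ε (m+1) 1) ≫ (eIdem C ε Δ (m+1) ≫ Dfront C Δ m)) =
        eIdem C ε Δ (m+2) ∧
    Nonempty ((Karoubi.mk (Cpow C (m+2)) (C ◁ eIdem C ε Δ (m+1)) h₃ : Karoubi 𝒜) ≅
        (Karoubi.mk (Cpow C (m+2)) (eIdem C ε Δ (m+2)) h₂ ⊞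
          Karoubi.mk (Cpow C (m+1)) (eIdem C ε Δ (m+1)) h₁)) := by
  have h := isImageRetract_eIdem hΔ m
  have hq := (eIdem_succ_succ_eq_sub h).symm
  exact ⟨h.π_comp, h.comp_σ, h.σ_comp, h.σ_π, hq, ⟨h.karoubiIso hq⟩⟩

open CategoryTheory.Idempotents in
/-- Lemma 4.5 (`lemma:C times im e`) together with the explicit identities from its proof:
for `n = m + 1 ≥ 1`, with `π := (id_C ⋆ ε ⋆ id_{n−1}) ∘ (id_1 ⋆ e_n)` and
`σ := (Δ ⋆ id_{n−1}) ∘ e_n`, one has `e_n ∘ π = π`, `σ ∘ e_n = σ`, `(id_1 ⋆ e_n) ∘ σ = σ`,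
`π ∘ σ = e_n`, `(id_1 ⋆ e_n) − σ ∘ π = e_{n+1}`; consequently in the Karoubi envelope
`C ⋆ im(e_n) ≅ im(e_{n+1}) ⊕ im(e_n)`.
(The idempotency facts needed to form the Karoubi objects are taken as hypotheses;
they hold by the right counit axiom.) -/
theorem stmt_5 {𝒜 : Type*} [Category 𝒜] [MonoidalCategory 𝒜] [Preadditive 𝒜]
    [MonoidalPreadditive 𝒜] [HasFiniteBiproducts 𝒜]
    [HasBinaryBiproducts (CategoryTheory.Idempotents.Karoubi 𝒜)]
    (C : 𝒜) (ε : C ⟶ 𝟙_ 𝒜) (Δ : C ⟶ C ⊗ C)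
    (hΔ : Δ ≫ (C ◁ ε) ≫ (ρ_ C).hom = 𝟙 C) (m : ℕ)
    (h₁ : eIdem C ε Δ (m+1) ≫ eIdem C ε Δ (m+1) = eIdem C ε Δ (m+1))
    (h₂ : eIdem C ε Δ (m+2) ≫ eIdem C ε Δ (m+2) = eIdem C ε Δ (m+2))
    (h₃ : (C ◁ eIdem C ε Δ (m+1)) ≫ (C ◁ eIdem C ε Δ (m+1)) = C ◁ eIdem C ε Δ (m+1)) :
    ((C ◁ eIdem C ε Δ (m+1)) ≫ epsAt C ε (m+1) 1) ≫ eIdem C ε Δ (m+1) =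
        (C ◁ eIdem C ε Δ (m+1)) ≫ epsAt C ε (m+1) 1 ∧
    eIdem C ε Δ (m+1) ≫ (eIdem C ε Δ (m+1) ≫ Dfront C Δ m) =
        eIdem C ε Δ (m+1) ≫ Dfront C Δ m ∧
    (eIdem C ε Δ (m+1) ≫ Dfront C Δ m) ≫ (C ◁ eIdem C ε Δ (m+1)) =
        eIdem C ε Δ (m+1) ≫ Dfront C Δ m ∧
    (eIdem C ε Δ (m+1) ≫ Dfront C Δ m) ≫ ((C ◁ eIdem C ε Δ (m+1)) ≫ epsAt C ε (m+1) 1) =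
        eIdem C ε Δ (m+1) ∧
    (show Cpow C (m+2) ⟶ Cpow C (m+2) from C ◁ eIdem C ε Δ (m+1)) -
        (show Cpow C (m+2) ⟶ Cpow C (m+2) from
          ((C ◁ eIdem C ε Δ (m+1)) ≫ epsAt C ε (m+1) 1) ≫ (eIdem C ε Δ (m+1) ≫ Dfront C Δ m)) =
        eIdem C ε Δ (m+2) ∧
    Nonempty ((Karoubi.mk (Cpow C (m+2)) (C ◁ eIdem C ε Δ (m+1)) h₃ : Karoubi 𝒜) ≅
        (Karoubi.mk (Cpow C (m+2)) (eIdem C ε Δ (m+2)) h₂ ⊞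
          Karoubi.mk (Cpow C (m+1)) (eIdem C ε Δ (m+1)) h₁)) :=
  stmt_5_general C ε Δ hΔ m h₁ h₂ h₃
end
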